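/- For the 3D Rayleigh secular equation ξ⁶ − 8ξ⁴ + 8ξ²(3 − 6/(3h+4)) − 16(1 − 3/(3h+4)) = 0 with h = B₃D/μ₃D ≥ 0, at h = 0 the equation becomes ξ⁶ − 8ξ⁴ + 12ξ² − 4 = 0, which has a root ξ with 0 < ξ² < 1; in particular, unlike the 2D case, the 3D Rayleigh wavespeed does not vanish in the limit of zero bulk modulus. -/

import Mathlib

/-!
In the variable `x = ξ²` the secular polynomial at `h = 0` is the cubic `x³ − 8x² + 12x − 4`,
which takes the value `−4` at `x = 0` and `1` at `x = 1`; the intermediate value theorem gives a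
root `x ∈ (0, 1)`, and `ξ = √x` is the required wavespeed ratio.
-/

open Set

lemma exists_mem_Ioo_cubic_eq_zero :
    ∃ x ∈ Ioo (0 : ℝ) 1, x ^ 3 - 8 * x ^ 2 + 12 * x - 4 = 0 := by
  have hcont : ContinuousOn (fun x : ℝ => x ^ 3 - 8 * x ^ 2 + 12 * x - 4) (Icc 0 1) := by
    fun_prop
  have hsign : (0 : ℝ) ∈ Ioo (0 ^ 3 - 8 * 0 ^ 2 + 12 * 0 - 4) (1 ^ 3 - 8 * 1 ^ 2 + 12 * 1 - 4) := by
    norm_num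
  exact intermediate_value_Ioo zero_le_one hcont hsign

/-- At `h = B₃D/μ₃D = 0` the 3D Rayleigh secular equation
`ξ⁶ − 8ξ⁴ + 8ξ²(3 − 6/(3h+4)) − 16(1 − 3/(3h+4)) = 0` becomes
`ξ⁶ − 8ξ⁴ + 12ξ² − 4 = 0`, which has a root with `0 < ξ² < 1`: the 3D Rayleigh
wavespeed does not vanish at zero bulk modulus. -/
theorem rayleigh_3d_secular_at_zero_bulk :
    (∀ ξ : ℝ,
      ξ ^ 6 - 8 * ξ ^ 4 + 8 * ξ ^ 2 * (3 - 6 / (3 * 0 + 4)) - 16 * (1 - 3 / (3 * 0 + 4))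
        = ξ ^ 6 - 8 * ξ ^ 4 + 12 * ξ ^ 2 - 4) ∧
    (∃ ξ : ℝ, 0 < ξ ^ 2 ∧ ξ ^ 2 < 1 ∧
      ξ ^ 6 - 8 * ξ ^ 4 + 12 * ξ ^ 2 - 4 = 0) := by
  refine ⟨fun ξ => by norm_num; ring, ?_⟩
  obtain ⟨x, ⟨hx0, hx1⟩, hroot⟩ := exists_mem_Ioo_cubic_eq_zero
  have hsq : √x ^ 2 = x := Real.sq_sqrt hx0.le
  refine ⟨√x, hsq.symm ▸ hx0, hsq.symm ▸ hx1, ?_⟩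
  calc √x ^ 6 - 8 * √x ^ 4 + 12 * √x ^ 2 - 4
      = (√x ^ 2) ^ 3 - 8 * (√x ^ 2) ^ 2 + 12 * √x ^ 2 - 4 := by ring
    _ = 0 := by rw [hsq]; exact hroot
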